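/- arXiv:2101.08881 — 8 statements merged into one kernel-verified Lean document; each statement's English description precedes it below -/
import Mathlib

section
/- If M is an (α, β)-module of G and N is an (α, β)-module of the induced subgraph G(M), then N is an (α, β)-module of G. -/
open Finset

def IsABModule {V : Type*} [Fintype V] [DecidableEq V]
    (G : SimpleGraph V) [DecidableRel G.Adj] (α β : ℕ) (M : Finset V) : Prop :=
  ∀ x ∉ M, M.card ≤ (M ∩ G.neighborFinset x).card + α ∨ (M ∩ G.neighborFinset x).card ≤ β

theorem isABModule_of_isABModule_induce {V : Type*} [Fintype V] [DecidableEq V]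
    (G : SimpleGraph V) [DecidableRel G.Adj] (α β : ℕ) (M : Finset V)
    (hM : IsABModule G α β M) (N : Finset (↑M : Set V))
    (hN : IsABModule (G.induce (↑M : Set V)) α β N) :
    IsABModule G α β (N.map (Function.Embedding.subtype _)) := by
  intro x hx
  set N' := N.map (Function.Embedding.subtype _) with hN'
  have hsub : N' ⊆ M := by
    intro y hy
    simp only [hN', mem_map, Function.Embedding.coe_subtype] at hy
    obtain ⟨⟨y, hy'⟩, _, rfl⟩ := hy
    exact hy'
  by_cases hxM : x ∈ M
  · -- use hN
    have hxN : (⟨x, hxM⟩ : (↑M : Set V)) ∉ N := by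
      intro h
      exact hx (mem_map.mpr ⟨⟨x, hxM⟩, h, rfl⟩)
    have key : (N ∩ (G.induce (↑M : Set V)).neighborFinset ⟨x, hxM⟩).map
        (Function.Embedding.subtype _) = N' ∩ G.neighborFinset x := by
      ext y
      simp only [mem_map, Function.Embedding.coe_subtype, mem_inter,
        SimpleGraph.mem_neighborFinset, hN', SimpleGraph.comap_adj]
      constructor
      · rintro ⟨⟨a, ha⟩, ⟨h1, h2⟩, rfl⟩
        refine ⟨⟨⟨a, ha⟩, h1, rfl⟩, ?_⟩
        simpa using h2
      · rintro ⟨⟨⟨a, ha⟩, h1, rfl⟩, h2⟩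
        exact ⟨⟨a, ha⟩, ⟨h1, by simpa using h2⟩, rfl⟩
    have hcard : (N ∩ (G.induce (↑M : Set V)).neighborFinset ⟨x, hxM⟩).card
        = (N' ∩ G.neighborFinset x).card := by
      rw [← key, Finset.card_map]
    have hcard2 : N'.card = N.card := Finset.card_map _
    rcases hN ⟨x, hxM⟩ hxN with h | h
    · left; omega
    · right; omega
  · rcases hM x hxM with h | h
    · left
      have h1 : (M \ G.neighborFinset x).card ≤ α := by
        have := Finset.card_sdiff_add_card_inter M (G.neighborFinset x)
        omega
      have h2 : N'.card ≤ (N' ∩ G.neighborFinset x).card + (M \ G.neighborFinset x).card := by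
        rw [← Finset.card_sdiff_add_card_inter N' (G.neighborFinset x), add_comm]
        have : N' \ G.neighborFinset x ⊆ M \ G.neighborFinset x :=
          Finset.sdiff_subset_sdiff hsub (le_refl _)
        have := Finset.card_le_card this
        omega
      omega
    · right
      exact le_trans (Finset.card_le_card
        (Finset.inter_subset_inter hsub (le_refl _))) h
end

section
/- If A and B are (α, β)-modules of a graph G, then A ∩ B is an (α, β)-module of G. -/
open Finset

/-- The α-neighbourhood `N_α(A)`: vertices outside `A` with at least `|A| - α`
neighbours in `A`. -/
def nAlpha {V : Type*} [Fintype V] [DecidableEq V]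
    (G : SimpleGraph V) [DecidableRel G.Adj] (α : ℕ) (A : Finset V) : Finset V :=
  univ.filter (fun x => x ∉ A ∧ A.card ≤ (G.neighborFinset x ∩ A).card + α)

/-- The β-non-neighbourhood `N̄_β(A)`: vertices outside `A` with at most `β`
neighbours in `A`. -/
def nBarBeta {V : Type*} [Fintype V] [DecidableEq V]
    (G : SimpleGraph V) [DecidableRel G.Adj] (β : ℕ) (A : Finset V) : Finset V :=
  univ.filter (fun x => x ∉ A ∧ (G.neighborFinset x ∩ A).card ≤ β)

/-- `z` is an `(α, β)`-splitter for `A`: `z ∉ A` and `β < |N(z) ∩ A| < |A| - α`. -/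
def IsSplitter {V : Type*} [Fintype V] [DecidableEq V]
    (G : SimpleGraph V) [DecidableRel G.Adj] (α β : ℕ) (A : Finset V) (z : V) : Prop :=
  z ∉ A ∧ β < (G.neighborFinset z ∩ A).card ∧ (G.neighborFinset z ∩ A).card + α < A.card

theorem isABModule_inter {V : Type*} [Fintype V] [DecidableEq V]
    (G : SimpleGraph V) [DecidableRel G.Adj] (α β : ℕ) (A B : Finset V)
    (hA : IsABModule G α β A) (hB : IsABModule G α β B) :
    IsABModule G α β (A ∩ B) := by
  intro x hx
  have key : ∀ M : Finset V, M.card ≤ (M ∩ G.neighborFinset x).card + α →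
      (A ∩ B) ⊆ M → (A ∩ B).card ≤ ((A ∩ B) ∩ G.neighborFinset x).card + α := by
    intro M hM hsub
    have h1 := card_inter_add_card_sdiff M (G.neighborFinset x)
    have h2 := card_inter_add_card_sdiff (A ∩ B) (G.neighborFinset x)
    have h3 : (A ∩ B) \ G.neighborFinset x ⊆ M \ G.neighborFinset x :=
      sdiff_subset_sdiff hsub Subset.rfl
    have h4 := card_le_card h3
    omega
  rcases (by rw [Finset.mem_inter, not_and_or] at hx; exact hx : x ∉ A ∨ x ∉ B) with h | h
  · rcases hA x h with h' | h'
    · exact Or.inl (key A h' inter_subset_left)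
    · exact Or.inr (le_trans (card_le_card (by intro v hv; simp only [mem_inter] at *; tauto)) h')
  · rcases hB x h with h' | h'
    · exact Or.inl (key B h' inter_subset_right)
    · exact Or.inr (le_trans (card_le_card (by intro v hv; simp only [mem_inter] at *; tauto)) h')
end

section
/- If A and B are (α, β)-modules of a graph G, then every (α, β)-splitter of A \ B belongs to A ∩ B, and every (α, β)-splitter of B \ A belongs to A ∩ B. -/
open Finset

lemma splitter_aux {V : Type*} [Fintype V] [DecidableEq V]
    (G : SimpleGraph V) [DecidableRel G.Adj] (α β : ℕ) (A B : Finset V)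
    (hA : IsABModule G α β A) (z : V) (hz : IsSplitter G α β (A \ B) z) :
    z ∈ A ∩ B := by
  obtain ⟨hzAB, h1, h2⟩ := hz
  have hzA : z ∈ A := by
    by_contra hzA
    set N := G.neighborFinset z with hN
    have e : (A \ B).card + (A ∩ B).card = A.card := Finset.card_sdiff_add_card_inter A B
    have hsub1 : N ∩ (A \ B) ⊆ N ∩ A := Finset.inter_subset_inter (Finset.Subset.refl N) Finset.sdiff_subset
    have hsub2 : A ∩ N ⊆ (N ∩ (A \ B)) ∪ (A ∩ B) := by
      intro x hx
      simp only [Finset.mem_inter] at hx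
      by_cases hxB : x ∈ B
      · exact Finset.mem_union_right _ (Finset.mem_inter.mpr ⟨hx.1, hxB⟩)
      · exact Finset.mem_union_left _ (Finset.mem_inter.mpr ⟨hx.2, Finset.mem_sdiff.mpr ⟨hx.1, hxB⟩⟩)
    have ineq : (A ∩ N).card ≤ (N ∩ (A \ B)).card + (A ∩ B).card :=
      le_trans (Finset.card_le_card hsub2) (Finset.card_union_le _ _)
    rcases hA z hzA with h | h <;> rw [show G.neighborFinset z = N from hN.symm] at h
    · omega
    · have : (N ∩ (A \ B)).card ≤ (A ∩ N).card := by
        rw [Finset.inter_comm A N]; exact Finset.card_le_card hsub1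
      omega
  have hzB : z ∈ B := by
    by_contra hzB
    exact hzAB (Finset.mem_sdiff.mpr ⟨hzA, hzB⟩)
  exact Finset.mem_inter.mpr ⟨hzA, hzB⟩

theorem splitter_of_sdiff_mem_inter {V : Type*} [Fintype V] [DecidableEq V]
    (G : SimpleGraph V) [DecidableRel G.Adj] (α β : ℕ) (A B : Finset V)
    (hA : IsABModule G α β A) (hB : IsABModule G α β B) :
    (∀ z, IsSplitter G α β (A \ B) z → z ∈ A ∩ B) ∧
      (∀ z, IsSplitter G α β (B \ A) z → z ∈ A ∩ B) := by
  refine ⟨fun z hz => splitter_aux G α β A B hA z hz, fun z hz => ?_⟩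
  have := splitter_aux G α β B A hB z hz
  rwa [Finset.inter_comm] at this
end

section
/- For every graph G, the family of (α, β)-modules of G is a Moore family on V: it contains V and is closed under intersection. -/
open Finset

theorem isABModule_moore_family {V : Type*} [Fintype V] [DecidableEq V]
    (G : SimpleGraph V) [DecidableRel G.Adj] (α β : ℕ) :
    IsABModule G α β (Finset.univ : Finset V) ∧
      ∀ A B : Finset V, IsABModule G α β A → IsABModule G α β B →
        IsABModule G α β (A ∩ B) := by
  constructor
  · intro x hx; exact absurd (mem_univ x) hx
  · intro A B hA hB x hx
    have key : ∀ C : Finset V, IsABModule G α β C → A ∩ B ⊆ C → x ∉ C →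
        (A ∩ B).card ≤ ((A ∩ B) ∩ G.neighborFinset x).card + α ∨
          ((A ∩ B) ∩ G.neighborFinset x).card ≤ β := by
      intro C hC hsub hxC
      rcases hC x hxC with h | h
      · left
        set N := G.neighborFinset x
        have hC' : (C \ N).card ≤ α := by
          have := card_inter_add_card_sdiff C N
          omega
        have hmono : ((A ∩ B) \ N).card ≤ (C \ N).card :=
          card_le_card (sdiff_subset_sdiff hsub le_rfl)
        have := card_inter_add_card_sdiff (A ∩ B) N
        omega
      · right
        exact le_trans (card_le_card (inter_subset_inter hsub le_rfl)) h
    rcases (by rw [mem_inter] at hx; tauto : x ∉ A ∨ x ∉ B) with h | h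
    · exact key A hA inter_subset_left h
    · exact key B hB inter_subset_right h
end

section
/- Let A and B be overlapping (α, β)-modules of a graph G with |A ∩ B| ≥ α + β + 1, and suppose A and B are non-trivial (so |A|, |B| ≥ α + β + 2 and A, B ≠ V). Then A ∪ B is a (2α, 2β)-module of G. -/
open Finset

/-- Two sets overlap: nonempty intersection and neither contained in the other. -/
def Overlap {V : Type*} [DecidableEq V] (A B : Finset V) : Prop :=
  (A ∩ B).Nonempty ∧ ¬ A ⊆ B ∧ ¬ B ⊆ A

theorem union_isABModule_double {V : Type*} [Fintype V] [DecidableEq V]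
    (G : SimpleGraph V) [DecidableRel G.Adj] (α β : ℕ) (A B : Finset V)
    (hA : IsABModule G α β A) (hB : IsABModule G α β B)
    (hover : Overlap A B) (hinter : α + β + 1 ≤ (A ∩ B).card)
    (hAnt : α + β + 2 ≤ A.card) (hBnt : α + β + 2 ≤ B.card)
    (hAV : A ≠ Finset.univ) (hBV : B ≠ Finset.univ) :
    IsABModule G (2 * α) (2 * β) (A ∪ B) := by
  intro x hx
  rw [Finset.mem_union] at hx
  push_neg at hx
  obtain ⟨hxA, hxB⟩ := hx
  set N := G.neighborFinset x with hN
  have hA' := hA x hxA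
  have hB' := hB x hxB
  simp only [← hN] at hA' hB'
  have hABN_B : ((A ∩ B) ∩ N).card ≤ (B ∩ N).card :=
    Finset.card_le_card (by intro y hy; simp only [Finset.mem_inter] at *; tauto)
  have hABN_A : ((A ∩ B) ∩ N).card ≤ (A ∩ N).card :=
    Finset.card_le_card (by intro y hy; simp only [Finset.mem_inter] at *; tauto)
  have hsubA : A ∩ N ⊆ ((A ∩ B) ∩ N) ∪ (A \ B) := by
    intro y hy
    simp only [Finset.mem_inter, Finset.mem_union, Finset.mem_sdiff] at *
    by_cases hyB : y ∈ B <;> tauto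
  have hsubB : B ∩ N ⊆ ((A ∩ B) ∩ N) ∪ (B \ A) := by
    intro y hy
    simp only [Finset.mem_inter, Finset.mem_union, Finset.mem_sdiff] at *
    by_cases hyA : y ∈ A <;> tauto
  have h1A : (A ∩ N).card ≤ ((A ∩ B) ∩ N).card + (A \ B).card :=
    le_trans (Finset.card_le_card hsubA) (Finset.card_union_le _ _)
  have h1B : (B ∩ N).card ≤ ((A ∩ B) ∩ N).card + (B \ A).card :=
    le_trans (Finset.card_le_card hsubB) (Finset.card_union_le _ _)
  have h2A : (A ∩ B).card + (A \ B).card = A.card :=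
    Finset.card_inter_add_card_sdiff A B
  have h2B : (A ∩ B).card + (B \ A).card = B.card := by
    rw [Finset.inter_comm]; exact Finset.card_inter_add_card_sdiff B A
  rcases hA' with hAhi | hAlo <;> rcases hB' with hBhi | hBlo
  · -- both high
    left
    have e1 : (A ∪ B).card + (A ∩ B).card = A.card + B.card :=
      Finset.card_union_add_card_inter A B
    have e2 : ((A ∪ B) ∩ N).card + ((A ∩ B) ∩ N).card = (A ∩ N).card + (B ∩ N).card := by
      have : (A ∪ B) ∩ N = (A ∩ N) ∪ (B ∩ N) := Finset.union_inter_distrib_right A B N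
      have h' : (A ∩ B) ∩ N = (A ∩ N) ∩ (B ∩ N) := by
        ext y; simp only [Finset.mem_inter]; tauto
      rw [this, h']
      exact Finset.card_union_add_card_inter _ _
    have e3 : ((A ∩ B) ∩ N).card ≤ (A ∩ B).card :=
      Finset.card_le_card (Finset.inter_subset_left)
    omega
  · -- A high, B low: contradiction
    exfalso; omega
  · -- A low, B high: contradiction
    exfalso; omega
  · -- both low
    right
    have : ((A ∪ B) ∩ N).card ≤ (A ∩ N).card + (B ∩ N).card := by
      rw [Finset.union_inter_distrib_right]
      exact Finset.card_union_le _ _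
    omega
end

section
/- If A and B are two disjoint (α, β)-modules of a graph G with |A| ≥ α + β + 1 and |B| ≥ α + β + 1, then it is not possible that both B ⊆ N_α(A) and A ⊆ N̄_β(B) hold. -/
open Finset

theorem not_nAlpha_and_nBarBeta {V : Type*} [Fintype V] [DecidableEq V]
    (G : SimpleGraph V) [DecidableRel G.Adj] (α β : ℕ) (A B : Finset V)
    (hA : IsABModule G α β A) (hB : IsABModule G α β B) (hdisj : Disjoint A B)
    (hAcard : α + β + 1 ≤ A.card) (hBcard : α + β + 1 ≤ B.card) :
    ¬ (B ⊆ nAlpha G α A ∧ A ⊆ nBarBeta G β B) := by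
  rintro ⟨h1, h2⟩
  have key : ∑ b ∈ B, (G.neighborFinset b ∩ A).card
      = ∑ a ∈ A, (G.neighborFinset a ∩ B).card := by
    have : ∀ (s t : Finset V) (x : V), (G.neighborFinset x ∩ s).card
        = ∑ a ∈ s, if G.Adj x a then 1 else 0 := by
      intro s t x
      rw [Finset.inter_comm, ← Finset.card_filter]
      congr 1
      ext a
      simp [SimpleGraph.mem_neighborFinset, and_comm]
    simp only [this A B, this B A]
    rw [Finset.sum_comm]
    congr 1; ext a; congr 1; ext b
    simp [G.adj_comm]
  have hsum1 : B.card * A.card ≤ (∑ b ∈ B, (G.neighborFinset b ∩ A).card) + B.card * α := by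
    have : ∑ b ∈ B, A.card ≤ ∑ b ∈ B, ((G.neighborFinset b ∩ A).card + α) := by
      apply Finset.sum_le_sum
      intro b hb
      have := h1 hb
      simp only [nAlpha, Finset.mem_filter] at this
      exact this.2.2
    simpa [Finset.sum_add_distrib, Finset.sum_const, mul_comm, Nat.smul_one_eq_cast] using this
  have hsum2 : ∑ a ∈ A, (G.neighborFinset a ∩ B).card ≤ A.card * β := by
    have : ∑ a ∈ A, (G.neighborFinset a ∩ B).card ≤ ∑ a ∈ A, β := by
      apply Finset.sum_le_sum
      intro a ha
      have := h2 ha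
      simp only [nBarBeta, Finset.mem_filter] at this
      exact this.2.2
    simpa [Finset.sum_const, mul_comm] using this
  rw [key] at hsum1
  nlinarith [hsum1, hsum2, hAcard, hBcard]
end

section
/- For every pair of nonnegative integers (α, β) ≠ (0, 0), a graph G with |V(G)| > 4(α + β) cannot simultaneously admit an α-series decomposition into two parts {A₁, A₂} and a β-parallel decomposition into two parts {B₁, B₂}. -/
open Finset

/-- `A` and `B` are α-connected: they are disjoint, both of size at least
`α + β + 1`, every vertex of `A` is an α-neighbour of `B` and vice versa. -/
def AlphaConnected {V : Type*} [Fintype V] [DecidableEq V]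
    (G : SimpleGraph V) [DecidableRel G.Adj] (α β : ℕ) (A B : Finset V) : Prop :=
  Disjoint A B ∧ α + β + 1 ≤ A.card ∧ α + β + 1 ≤ B.card ∧
    A ⊆ nAlpha G α B ∧ B ⊆ nAlpha G α A

/-- `A` and `B` are β-non-connected. -/
def BetaNonConnected {V : Type*} [Fintype V] [DecidableEq V]
    (G : SimpleGraph V) [DecidableRel G.Adj] (α β : ℕ) (A B : Finset V) : Prop :=
  Disjoint A B ∧ α + β + 1 ≤ A.card ∧ α + β + 1 ≤ B.card ∧
    A ⊆ nBarBeta G β B ∧ B ⊆ nBarBeta G β A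

/-- An α-series decomposition of `G` into the two parts `V₁, V₂`. -/
def IsTwoPartSeriesDecomp {V : Type*} [Fintype V] [DecidableEq V]
    (G : SimpleGraph V) [DecidableRel G.Adj] (α β : ℕ) (V₁ V₂ : Finset V) : Prop :=
  V₁.Nonempty ∧ V₂.Nonempty ∧ Disjoint V₁ V₂ ∧ V₁ ∪ V₂ = Finset.univ ∧
    IsABModule G α β V₁ ∧ IsABModule G α β V₂ ∧
    (α + β + 1 ≤ V₁.card ∨ α + β + 1 ≤ V₂.card) ∧
    AlphaConnected G α β V₁ V₂

/-- A β-parallel decomposition of `G` into the two parts `V₁, V₂`. -/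
def IsTwoPartParallelDecomp {V : Type*} [Fintype V] [DecidableEq V]
    (G : SimpleGraph V) [DecidableRel G.Adj] (α β : ℕ) (V₁ V₂ : Finset V) : Prop :=
  V₁.Nonempty ∧ V₂.Nonempty ∧ Disjoint V₁ V₂ ∧ V₁ ∪ V₂ = Finset.univ ∧
    IsABModule G α β V₁ ∧ IsABModule G α β V₂ ∧
    (α + β + 1 ≤ V₁.card ∨ α + β + 1 ≤ V₂.card) ∧
    BetaNonConnected G α β V₁ V₂

lemma key_le {V : Type*} [Fintype V] [DecidableEq V] (G : SimpleGraph V) [DecidableRel G.Adj]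
    (α β : ℕ) {A B C : Finset V} {z : V}
    (hz1 : z ∈ nAlpha G α A) (hz2 : z ∈ nBarBeta G β B)
    (hCA : C ⊆ A) (hCB : C ⊆ B) : C.card ≤ α + β := by
  simp only [nAlpha, nBarBeta, mem_filter, mem_univ, true_and] at hz1 hz2
  set N := G.neighborFinset z with hN
  have h1 : (C \ N).card ≤ (A \ N).card :=
    card_le_card (sdiff_subset_sdiff hCA le_rfl)
  have h2 : (C ∩ N).card ≤ (N ∩ B).card := by
    apply card_le_card
    intro x hx
    simp only [mem_inter] at hx ⊢
    exact ⟨hx.2, hCB hx.1⟩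
  have e1 : (A ∩ N).card + (A \ N).card = A.card := card_inter_add_card_sdiff A N
  have e2 : (C ∩ N).card + (C \ N).card = C.card := card_inter_add_card_sdiff C N
  have e3 : (N ∩ A).card = (A ∩ N).card := by rw [inter_comm]
  exact le_trans (by omega) (add_le_add_right hz2.2 α) |>.trans (by omega)

theorem no_simultaneous_two_part_series_and_parallel
    {V : Type*} [Fintype V] [DecidableEq V]
    (G : SimpleGraph V) [DecidableRel G.Adj] (α β : ℕ)
    (hαβ : ¬ (α = 0 ∧ β = 0)) (hV : 4 * (α + β) < Fintype.card V)
    (A₁ A₂ B₁ B₂ : Finset V)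
    (hS : IsTwoPartSeriesDecomp G α β A₁ A₂)
    (hP : IsTwoPartParallelDecomp G α β B₁ B₂) :
    False := by
  obtain ⟨hA1ne, hA2ne, hAdis, hAun, -, -, -, -, cA1, cA2, hA12, hA21⟩ := hS
  obtain ⟨hB1ne, hB2ne, hBdis, hBun, -, -, -, -, cB1, cB2, hB12, hB21⟩ := hP
  have memUn : ∀ (S T : Finset V), S ∪ T = univ → ∀ x, x ∉ S → x ∈ T := by
    intro S T h x hx
    have hx' : x ∈ S ∪ T := h ▸ mem_univ x
    rw [mem_union] at hx'
    tauto
  rcases (A₁ ∩ B₁).eq_empty_or_nonempty with h11 | h11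
  · obtain ⟨z, hz⟩ := hB1ne
    have hzA2 : z ∈ A₂ := memUn A₁ A₂ hAun z fun h => by
      have : z ∈ A₁ ∩ B₁ := mem_inter.mpr ⟨h, hz⟩; simp [h11] at this
    have hsub : A₁ ⊆ B₂ := fun x hx => memUn B₁ B₂ hBun x fun h => by
      have : x ∈ A₁ ∩ B₁ := mem_inter.mpr ⟨hx, h⟩; simp [h11] at this
    have := key_le G α β (hA21 hzA2) (hB12 hz) (Subset.refl A₁) hsub
    omega
  rcases (A₁ ∩ B₂).eq_empty_or_nonempty with h12 | h12
  · obtain ⟨z, hz⟩ := hB2ne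
    have hzA2 : z ∈ A₂ := memUn A₁ A₂ hAun z fun h => by
      have : z ∈ A₁ ∩ B₂ := mem_inter.mpr ⟨h, hz⟩; simp [h12] at this
    have hsub : A₁ ⊆ B₁ := fun x hx => by
      rcases mem_union.mp (hBun ▸ mem_univ x) with h | h
      · exact h
      · have : x ∈ A₁ ∩ B₂ := mem_inter.mpr ⟨hx, h⟩; simp [h12] at this
    have := key_le G α β (hA21 hzA2) (hB21 hz) (Subset.refl A₁) hsub
    omega
  rcases (A₂ ∩ B₁).eq_empty_or_nonempty with h21 | h21
  · obtain ⟨z, hz⟩ := hB1ne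
    have hzA1 : z ∈ A₁ := by
      rcases mem_union.mp (hAun ▸ mem_univ z) with h | h
      · exact h
      · have : z ∈ A₂ ∩ B₁ := mem_inter.mpr ⟨h, hz⟩; simp [h21] at this
    have hsub : A₂ ⊆ B₂ := fun x hx => memUn B₁ B₂ hBun x fun h => by
      have : x ∈ A₂ ∩ B₁ := mem_inter.mpr ⟨hx, h⟩; simp [h21] at this
    have := key_le G α β (hA12 hzA1) (hB12 hz) (Subset.refl A₂) hsub
    omega
  rcases (A₂ ∩ B₂).eq_empty_or_nonempty with h22 | h22
  · obtain ⟨z, hz⟩ := hB2ne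
    have hzA1 : z ∈ A₁ := by
      rcases mem_union.mp (hAun ▸ mem_univ z) with h | h
      · exact h
      · have : z ∈ A₂ ∩ B₂ := mem_inter.mpr ⟨h, hz⟩; simp [h22] at this
    have hsub : A₂ ⊆ B₁ := fun x hx => by
      rcases mem_union.mp (hBun ▸ mem_univ x) with h | h
      · exact h
      · have : x ∈ A₂ ∩ B₂ := mem_inter.mpr ⟨hx, h⟩; simp [h22] at this
    have := key_le G α β (hA12 hzA1) (hB21 hz) (Subset.refl A₂) hsub
    omega
  -- all four cells nonempty; pigeonhole
  have splitA : ∀ S : Finset V, (S ∩ B₁).card + (S ∩ B₂).card = S.card := by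
    intro S
    rw [← card_union_of_disjoint (hBdis.mono inter_subset_right inter_subset_right),
      ← inter_union_distrib_left, hBun, inter_univ]
  have hAcard : A₁.card + A₂.card = Fintype.card V := by
    rw [← card_union_of_disjoint hAdis, hAun, card_univ]
  have hbig : α + β + 1 ≤ (A₁ ∩ B₁).card ∨ α + β + 1 ≤ (A₁ ∩ B₂).card ∨
      α + β + 1 ≤ (A₂ ∩ B₁).card ∨ α + β + 1 ≤ (A₂ ∩ B₂).card := by
    have e1 := splitA A₁; have e2 := splitA A₂; omega
  rcases hbig with hbig | hbig | hbig | hbig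
  · obtain ⟨z, hz⟩ := h22
    rw [mem_inter] at hz
    have := key_le G α β (hA21 hz.1) (hB21 hz.2) inter_subset_left inter_subset_right
    omega
  · obtain ⟨z, hz⟩ := h21
    rw [mem_inter] at hz
    have := key_le G α β (hA21 hz.1) (hB12 hz.2) inter_subset_left inter_subset_right
    omega
  · obtain ⟨z, hz⟩ := h12
    rw [mem_inter] at hz
    have := key_le G α β (hA12 hz.1) (hB21 hz.2) inter_subset_left inter_subset_right
    omega
  · obtain ⟨z, hz⟩ := h11
    rw [mem_inter] at hz
    have := key_le G α β (hA12 hz.1) (hB12 hz.2) inter_subset_left inter_subset_right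
    omega
end

section
/- Let G = (X, Y, E) be a bipartite graph with parts X and Y. If A and B are (α, β)-modules of G with A, B ⊆ X and A ∩ B ≠ ∅, then A \ B and B \ A are also (α, β)-modules of G. -/
open Finset

lemma sdiff_aux {V : Type*} [Fintype V] [DecidableEq V]
    (G : SimpleGraph V) [DecidableRel G.Adj] (α β : ℕ) (X : Finset V)
    (hindep : ∀ u ∈ X, ∀ v ∈ X, ¬ G.Adj u v)
    (A B : Finset V) (hAX : A ⊆ X)
    (hA : IsABModule G α β A) : IsABModule G α β (A \ B) := by
  intro x hx
  by_cases hxX : x ∈ X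
  · right
    have : (A \ B) ∩ G.neighborFinset x = ∅ := by
      apply Finset.eq_empty_of_forall_notMem
      intro m hm
      simp only [Finset.mem_inter, Finset.mem_sdiff, SimpleGraph.mem_neighborFinset] at hm
      exact hindep x hxX m (hAX hm.1.1) hm.2
    simp [this]
  · have hxA : x ∉ A := fun h => hxX (hAX h)
    have key : (A \ B) ∩ G.neighborFinset x = (A ∩ G.neighborFinset x) \ B := by
      ext m; simp only [Finset.mem_inter, Finset.mem_sdiff]; tauto
    have f3 : (A \ B).card + (A ∩ B).card = A.card := Finset.card_sdiff_add_card_inter A B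
    have f4 : ((A ∩ G.neighborFinset x) \ B).card + ((A ∩ G.neighborFinset x) ∩ B).card
        = (A ∩ G.neighborFinset x).card := Finset.card_sdiff_add_card_inter _ B
    have f2 : ((A ∩ G.neighborFinset x) ∩ B).card ≤ (A ∩ B).card := by
      apply Finset.card_le_card
      intro m hm
      simp only [Finset.mem_inter] at *
      tauto
    rcases hA x hxA with h | h
    · left
      rw [key]
      omega
    · right
      rw [key]
      have := Finset.card_le_card (Finset.sdiff_subset (s := A ∩ G.neighborFinset x) (t := B))
      omega

theorem bipartite_sdiff_isABModule {V : Type*} [Fintype V] [DecidableEq V]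
    (G : SimpleGraph V) [DecidableRel G.Adj] (α β : ℕ) (X Y : Finset V)
    (hpart : Disjoint X Y ∧ X ∪ Y = Finset.univ)
    (hbip : ∀ u v : V, G.Adj u v → (u ∈ X ∧ v ∈ Y) ∨ (u ∈ Y ∧ v ∈ X))
    (A B : Finset V) (hAX : A ⊆ X) (hBX : B ⊆ X)
    (hA : IsABModule G α β A) (hB : IsABModule G α β B)
    (hAB : (A ∩ B).Nonempty) :
    IsABModule G α β (A \ B) ∧ IsABModule G α β (B \ A) := by
  have hindep : ∀ u ∈ X, ∀ v ∈ X, ¬ G.Adj u v := by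
    intro u hu v hv hadj
    rcases hbip u v hadj with ⟨h1, h2⟩ | ⟨h1, h2⟩
    · exact (Finset.disjoint_left.mp hpart.1) hv h2
    · exact (Finset.disjoint_left.mp hpart.1) hu h1
  exact ⟨sdiff_aux G α β X hindep A B hAX hA, sdiff_aux G α β X hindep B A hBX hB⟩
end
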